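/- Let n ∈ ℕ. If G(s,t) = H(s,t²) is a polynomial of degree at most n that is even in t, then G(ψ(u,v)) = H(u, (−a+(a−c)u²+v²)/(b−a)) for all (u,v) ∈ Λ_{a,b,c}, and the right-hand side is a polynomial in (u,v), even in v, of degree at most n. Conversely, if g(u,v) = h(u,v²) is a polynomial of degree at most n that is even in v, then g(ψ⁻¹(s,t)) = h(s, (b−a)t² + a(1−s²) + c s²) for all (s,t) ∈ B²₊, and the right-hand side is a polynomial in (s,t), even in t, of degree at most n. These two assignments G ↦ G∘ψ and g ↦ g∘ψ⁻¹ are mutually inverse bijections between the set of polynomials of degree at most n even in the second variable (viewed as functions on B²₊) and the same set (viewed as functions on Λ_{a,b,c}). -/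
import Mathlib


open MeasureTheory

noncomputable section

/-- The upper half `Λ_{a,b,c}` of the fully symmetric domain `Ω_{a,b,c}`. -/
def LamSet (a b c : ℝ) : Set (ℝ × ℝ) :=
  {p | a + (c - a) * p.1 ^ 2 ≤ p.2 ^ 2 ∧ p.2 ^ 2 ≤ b + (c - b) * p.1 ^ 2 ∧
       |p.1| ≤ 1 ∧ 0 ≤ p.2}

/-- The closed upper half-disk `B²₊`. -/
def Bplus : Set (ℝ × ℝ) := {p | p.1 ^ 2 + p.2 ^ 2 ≤ 1 ∧ 0 ≤ p.2}

/-- The function `𝔱(u,v) = sqrt((−a+(a−c)u²+v²)/(b−a))`. -/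
def frakt (a b c : ℝ) (p : ℝ × ℝ) : ℝ :=
  Real.sqrt ((-a + (a - c) * p.1 ^ 2 + p.2 ^ 2) / (b - a))

/-- The map `ψ(u,v) = (u, 𝔱(u,v))`. -/
def psiMap (a b c : ℝ) (p : ℝ × ℝ) : ℝ × ℝ := (p.1, frakt a b c p)

/-- The inverse map `ψ⁻¹(s,t) = (s, sqrt((b−a)t² + a(1−s²) + cs²))`. -/
def psiInvMap (a b c : ℝ) (p : ℝ × ℝ) : ℝ × ℝ :=
  (p.1, Real.sqrt ((b - a) * p.2 ^ 2 + a * (1 - p.1 ^ 2) + c * p.1 ^ 2))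

/-- Evaluation of a polynomial in two variables at a point of `ℝ²`. -/
def ev2 (P : MvPolynomial (Fin 2) ℝ) (p : ℝ × ℝ) : ℝ :=
  MvPolynomial.eval ![p.1, p.2] P

/-- A polynomial of two variables is even in the second variable. -/
def EvenSnd (P : MvPolynomial (Fin 2) ℝ) : Prop :=
  ∀ u v : ℝ, ev2 P (u, -v) = ev2 P (u, v)

/-- Functions `ℝ² → ℝ` given by a polynomial of degree at most `n` that is even in the
second variable. -/
def EvenPolyFun (n : ℕ) : Set (ℝ × ℝ → ℝ) :=
  {F | ∃ P : MvPolynomial (Fin 2) ℝ, P.totalDegree ≤ n ∧ EvenSnd P ∧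
    ∀ p : ℝ × ℝ, F p = ev2 P p}

open MvPolynomial

lemma fin2_finsupp_eq (m : Fin 2 →₀ ℕ) :
    m = Finsupp.single 0 (m 0) + Finsupp.single 1 (m 1) := by
  ext i
  fin_cases i <;> simp [Finsupp.single_apply]

lemma fin2_prod_pow {M : Type*} [CommMonoid M] (m : Fin 2 →₀ ℕ) (x : Fin 2 → M) :
    (m.prod fun i e => x i ^ e) = x 0 ^ m 0 * x 1 ^ m 1 := by
  rw [Finsupp.prod_fintype]
  · exact Fin.prod_univ_two _
  · intro i; exact pow_zero _

lemma fin2_sum_eq (m : Fin 2 →₀ ℕ) : (m.sum fun _ e => e) = m 0 + m 1 := by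
  rw [Finsupp.sum_fintype]
  · exact Fin.sum_univ_two _
  · intro i; rfl

lemma single_add_single_apply0 (i j : ℕ) :
    ((Finsupp.single (0 : Fin 2) i + Finsupp.single 1 j : Fin 2 →₀ ℕ)) 0 = i := by
  rw [Finsupp.add_apply]; simp [Finsupp.single_apply]

lemma single_add_single_apply1 (i j : ℕ) :
    ((Finsupp.single (0 : Fin 2) i + Finsupp.single 1 j : Fin 2 →₀ ℕ)) 1 = j := by
  rw [Finsupp.add_apply]; simp [Finsupp.single_apply]

lemma aeval_mono2 (f : Fin 2 → MvPolynomial (Fin 2) ℝ) (m : Fin 2 →₀ ℕ) (r : ℝ) :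
    aeval f (monomial m r) = C r * f 0 ^ m 0 * f 1 ^ m 1 := by
  rw [aeval_monomial, fin2_prod_pow, algebraMap_eq, mul_assoc]

lemma aeval_as_sum (f : Fin 2 → MvPolynomial (Fin 2) ℝ) (P : MvPolynomial (Fin 2) ℝ) :
    aeval f P = ∑ m ∈ P.support, C (coeff m P) * f 0 ^ m 0 * f 1 ^ m 1 := by
  conv_lhs => rw [P.as_sum]
  rw [map_sum]
  exact Finset.sum_congr rfl fun m _ => aeval_mono2 f m _

lemma mono_eq_CXX (m : Fin 2 →₀ ℕ) (r : ℝ) :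
    (monomial m r : MvPolynomial (Fin 2) ℝ) = C r * X 0 ^ m 0 * X 1 ^ m 1 := by
  rw [monomial_eq, fin2_prod_pow, mul_assoc]

lemma eval_comp_aeval (x : Fin 2 → ℝ) (f : Fin 2 → MvPolynomial (Fin 2) ℝ)
    (P : MvPolynomial (Fin 2) ℝ) :
    eval x (aeval f P) = eval (fun i => eval x (f i)) P := by
  induction P using MvPolynomial.induction_on with
  | C r => simp
  | add p q hp hq => rw [map_add, map_add, hp, hq, map_add]
  | mul_X p i hp => rw [map_mul, map_mul, aeval_X, hp, map_mul, eval_X]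

lemma reflect_coeff (P : MvPolynomial (Fin 2) ℝ) (m : Fin 2 →₀ ℕ) :
    coeff m (aeval ![X 0, -X 1] P) = (-1) ^ (m 1) * coeff m P := by
  rw [aeval_as_sum]
  have key : ∀ m' : Fin 2 →₀ ℕ, ∀ r : ℝ,
      (C r * (![X 0, -X 1] : Fin 2 → MvPolynomial (Fin 2) ℝ) 0 ^ m' 0 *
        (![X 0, -X 1] : Fin 2 → MvPolynomial (Fin 2) ℝ) 1 ^ m' 1)
        = monomial m' ((-1) ^ (m' 1) * r) := by
    intro m' r
    simp only [Matrix.cons_val_zero, Matrix.cons_val_one, Matrix.head_cons]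
    rw [neg_pow, mono_eq_CXX, map_mul, map_pow,
      show (C (-1 : ℝ) : MvPolynomial (Fin 2) ℝ) = -1 from by simp]
    ring
  rw [Finset.sum_congr rfl fun m' hm' => key m' (coeff m' P)]
  rw [coeff_sum]
  simp only [coeff_monomial]
  rw [Finset.sum_ite_eq' P.support m (fun m' => (-1 : ℝ) ^ (m' 1) * coeff m' P)]
  by_cases h : m ∈ P.support
  · rw [if_pos h]
  · rw [if_neg h, MvPolynomial.notMem_support_iff.mp h, mul_zero]

/-- doubling map on exponents -/
def dbl (m : Fin 2 →₀ ℕ) : Fin 2 →₀ ℕ := Finsupp.single 0 (m 0) + Finsupp.single 1 (2 * m 1)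

lemma dbl_apply0 (m : Fin 2 →₀ ℕ) : dbl m 0 = m 0 := single_add_single_apply0 _ _
lemma dbl_apply1 (m : Fin 2 →₀ ℕ) : dbl m 1 = 2 * m 1 := single_add_single_apply1 _ _

lemma dbl_inj : Function.Injective dbl := by
  intro m m' h
  have h0 : m 0 = m' 0 := by
    have := congrArg (fun f : Fin 2 →₀ ℕ => f 0) h
    simpa [dbl_apply0] using this
  have h1 : 2 * m 1 = 2 * m' 1 := by
    have := congrArg (fun f : Fin 2 →₀ ℕ => f 1) h
    simpa [dbl_apply1] using this
  have h1' : m 1 = m' 1 := by omega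
  rw [fin2_finsupp_eq m, fin2_finsupp_eq m', h0, h1']

lemma double_coeff (P : MvPolynomial (Fin 2) ℝ) (m : Fin 2 →₀ ℕ) :
    coeff (dbl m) (aeval ![X 0, X 1 ^ 2] P) = coeff m P := by
  rw [aeval_as_sum]
  have key : ∀ m' : Fin 2 →₀ ℕ, ∀ r : ℝ,
      (C r * (![X 0, X 1 ^ 2] : Fin 2 → MvPolynomial (Fin 2) ℝ) 0 ^ m' 0 *
        (![X 0, X 1 ^ 2] : Fin 2 → MvPolynomial (Fin 2) ℝ) 1 ^ m' 1)
        = monomial (dbl m') r := by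
    intro m' r
    simp only [Matrix.cons_val_zero, Matrix.cons_val_one, Matrix.head_cons]
    rw [← pow_mul, mono_eq_CXX, dbl_apply0, dbl_apply1]
  rw [Finset.sum_congr rfl fun m' hm' => key m' (coeff m' P)]
  rw [coeff_sum]
  simp only [coeff_monomial]
  have : ∀ m' ∈ P.support, (if dbl m' = dbl m then coeff m' P else 0)
      = if m' = m then coeff m' P else 0 := by
    intro m' _
    congr 1
    simp only [eq_iff_iff]
    exact ⟨fun h => dbl_inj h, fun h => by rw [h]⟩
  rw [Finset.sum_congr rfl this, Finset.sum_ite_eq' P.support m (fun m' => coeff m' P)]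
  by_cases h : m ∈ P.support
  · rw [if_pos h]
  · rw [if_neg h, MvPolynomial.notMem_support_iff.mp h]


lemma ev2_eval (P : MvPolynomial (Fin 2) ℝ) (u v : ℝ) :
    ev2 P (u, v) = eval ![u, v] P := rfl

lemma vec_eta (x : Fin 2 → ℝ) : x = ![x 0, x 1] := by
  funext i; fin_cases i <;> rfl

/-- Odd coefficients of an even polynomial vanish. -/
lemma even_odd_coeff_zero {P : MvPolynomial (Fin 2) ℝ} (hP : EvenSnd P)
    (m : Fin 2 →₀ ℕ) (hm : ¬ Even (m 1)) : coeff m P = 0 := by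
  have hrefl : aeval ![X 0, -X 1] P = P := by
    apply MvPolynomial.funext
    intro x
    rw [eval_comp_aeval]
    have hx : (fun i => eval x ((![X 0, -X 1] : Fin 2 → MvPolynomial (Fin 2) ℝ) i))
        = ![x 0, -(x 1)] := by
      funext i; fin_cases i <;> simp
    rw [hx]
    have := hP (x 0) (x 1)
    rw [ev2_eval, ev2_eval] at this
    rw [this, ← vec_eta]
  have := reflect_coeff P m
  rw [hrefl] at this
  rw [Odd.neg_one_pow (Nat.not_even_iff_odd.mp hm)] at this
  linarith

/-- Every even polynomial is a polynomial in the square of the second variable. -/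
lemma even_halving {P : MvPolynomial (Fin 2) ℝ} (hP : EvenSnd P) :
    ∃ H : MvPolynomial (Fin 2) ℝ, ∀ s t : ℝ, ev2 P (s, t) = ev2 H (s, t ^ 2) := by
  refine ⟨∑ m ∈ P.support,
    monomial (Finsupp.single 0 (m 0) + Finsupp.single 1 (m 1 / 2)) (coeff m P), fun s t => ?_⟩
  rw [ev2_eval, ev2_eval, map_sum, eval_eq' ![s, t] P]
  refine Finset.sum_congr rfl fun m hm => ?_
  rw [eval_monomial, fin2_prod_pow, single_add_single_apply0, single_add_single_apply1]
  by_cases he : Even (m 1)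
  · have h2 : 2 * (m 1 / 2) = m 1 := Nat.two_mul_div_two_of_even he
    have : (![s, t] : Fin 2 → ℝ) 0 ^ m 0 * (![s, t] : Fin 2 → ℝ) 1 ^ m 1
        = (![s, t ^ 2] : Fin 2 → ℝ) 0 ^ m 0 * (![s, t ^ 2] : Fin 2 → ℝ) 1 ^ (m 1 / 2) := by
      simp only [Matrix.cons_val_zero, Matrix.cons_val_one, Matrix.head_cons]
      rw [← pow_mul, h2]
    rw [← this, Fin.prod_univ_two]
  · rw [even_odd_coeff_zero hP m he, zero_mul, zero_mul]

lemma subst_eval (Q H : MvPolynomial (Fin 2) ℝ) (u v : ℝ) :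
    ev2 (aeval ![X 0, Q] H) (u, v) = eval ![u, ev2 Q (u, v)] H := by
  rw [ev2_eval, eval_comp_aeval]
  have hx : (fun i => eval ![u, v] ((![X 0, Q] : Fin 2 → MvPolynomial (Fin 2) ℝ) i))
      = ![u, ev2 Q (u, v)] := by
    funext i; fin_cases i <;> simp [ev2_eval]
  rw [hx]

lemma subst_even (Q H : MvPolynomial (Fin 2) ℝ)
    (hQe : ∀ u v : ℝ, ev2 Q (u, -v) = ev2 Q (u, v)) :
    EvenSnd (aeval ![X 0, Q] H) := by
  intro u v
  rw [subst_eval, subst_eval, hQe]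

lemma subst_deg {n : ℕ} (Q H G : MvPolynomial (Fin 2) ℝ) (hQ : Q.totalDegree ≤ 2)
    (hG : G.totalDegree ≤ n) (hGH : ∀ s t : ℝ, ev2 G (s, t) = ev2 H (s, t ^ 2)) :
    (aeval ![X 0, Q] H).totalDegree ≤ n := by
  have hGeq : G = aeval ![X 0, X 1 ^ 2] H := by
    apply MvPolynomial.funext
    intro x
    rw [eval_comp_aeval]
    have hx : (fun i => eval x ((![X 0, X 1 ^ 2] : Fin 2 → MvPolynomial (Fin 2) ℝ) i))
        = ![x 0, x 1 ^ 2] := by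
      funext i; fin_cases i <;> simp
    have := hGH (x 0) (x 1)
    rw [ev2_eval, ev2_eval] at this
    rw [hx, ← this, ← vec_eta x]
  have hsupp : ∀ m ∈ H.support, m 0 + 2 * m 1 ≤ n := by
    intro m hm
    have hco : coeff (dbl m) G = coeff m H := by rw [hGeq]; exact double_coeff H m
    have hmem : dbl m ∈ G.support := by
      rw [MvPolynomial.mem_support_iff, hco]
      exact MvPolynomial.mem_support_iff.mp hm
    have := MvPolynomial.le_totalDegree hmem
    rw [fin2_sum_eq, dbl_apply0, dbl_apply1] at this
    omega
  rw [aeval_as_sum]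
  apply MvPolynomial.totalDegree_finsetSum_le
  intro m hm
  calc (C (coeff m H) * (![X 0, Q] : Fin 2 → MvPolynomial (Fin 2) ℝ) 0 ^ m 0 *
          (![X 0, Q] : Fin 2 → MvPolynomial (Fin 2) ℝ) 1 ^ m 1).totalDegree
      ≤ (C (coeff m H) * (![X 0, Q] : Fin 2 → MvPolynomial (Fin 2) ℝ) 0 ^ m 0).totalDegree
        + ((![X 0, Q] : Fin 2 → MvPolynomial (Fin 2) ℝ) 1 ^ m 1).totalDegree :=
        totalDegree_mul _ _
    _ ≤ (m 0 + 2 * m 1) := by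
        simp only [Matrix.cons_val_zero, Matrix.cons_val_one, Matrix.head_cons]
        have h1 : ((C (coeff m H) : MvPolynomial (Fin 2) ℝ) * X 0 ^ m 0).totalDegree ≤ m 0 := by
          refine (totalDegree_mul _ _).trans ?_
          rw [totalDegree_C, totalDegree_X_pow]
          omega
        have h2 : ((Q : MvPolynomial (Fin 2) ℝ) ^ m 1).totalDegree ≤ 2 * m 1 := by
          refine (totalDegree_pow _ _).trans ?_
          calc m 1 * Q.totalDegree ≤ m 1 * 2 := Nat.mul_le_mul_left _ hQ
            _ = 2 * m 1 := Nat.mul_comm _ _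
        omega
    _ ≤ n := hsupp m hm

lemma ev2_analyticAt (P : MvPolynomial (Fin 2) ℝ) (z : ℝ × ℝ) :
    AnalyticAt ℝ (fun p => ev2 P p) z := by
  induction P using MvPolynomial.induction_on with
  | C r =>
      have : (fun p : ℝ × ℝ => ev2 (C r) p) = fun _ => r := by
        funext p; simp [ev2]
      rw [this]; exact analyticAt_const
  | add p q hp hq =>
      have : (fun x : ℝ × ℝ => ev2 (p + q) x) = fun x => ev2 p x + ev2 q x := by
        funext x; simp [ev2]
      rw [this]; exact hp.add hq
  | mul_X p i hp =>
      have : (fun x : ℝ × ℝ => ev2 (p * X i) x)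
          = fun x => ev2 p x * (![x.1, x.2] : Fin 2 → ℝ) i := by
        funext x; simp [ev2]
      rw [this]
      refine hp.mul ?_
      fin_cases i
      · simpa using (analyticAt_fst : AnalyticAt ℝ (fun p : ℝ × ℝ => p.1) z)
      · simpa using (analyticAt_snd : AnalyticAt ℝ (fun p : ℝ × ℝ => p.2) z)

/-- Identity principle: polynomials agreeing on a nonempty open set agree everywhere. -/
lemma poly_eq_of_eq_on_open {P Q : MvPolynomial (Fin 2) ℝ} {S : Set (ℝ × ℝ)}
    (hS : IsOpen S) {z : ℝ × ℝ} (hz : z ∈ S) (h : ∀ p ∈ S, ev2 P p = ev2 Q p) :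
    ∀ p : ℝ × ℝ, ev2 P p = ev2 Q p := by
  have hP : AnalyticOnNhd ℝ (fun p => ev2 P p) Set.univ := fun x _ => ev2_analyticAt P x
  have hQ : AnalyticOnNhd ℝ (fun p => ev2 Q p) Set.univ := fun x _ => ev2_analyticAt Q x
  have hev : (fun p => ev2 P p) =ᶠ[nhds z] (fun p => ev2 Q p) :=
    Filter.eventuallyEq_of_mem (hS.mem_nhds hz) h
  have := hP.eqOn_of_preconnected_of_eventuallyEq hQ isPreconnected_univ (Set.mem_univ z) hev
  intro p
  exact this (Set.mem_univ p)

/-- Two even polynomial functions agreeing on a nonempty open set are equal. -/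
lemma evenPolyFun_ext {n : ℕ} {F F' : ℝ × ℝ → ℝ} (hF : F ∈ EvenPolyFun n)
    (hF' : F' ∈ EvenPolyFun n) {S : Set (ℝ × ℝ)} (hS : IsOpen S) {z : ℝ × ℝ} (hz : z ∈ S)
    (h : ∀ p ∈ S, F p = F' p) : F = F' := by
  obtain ⟨P, _, _, hP⟩ := hF
  obtain ⟨P', _, _, hP'⟩ := hF'
  have := poly_eq_of_eq_on_open hS hz
    (fun p hp => (hP p).symm.trans ((h p hp).trans (hP' p)))
  funext p
  rw [hP, hP', this]

/-- An open subset of `LamSet`. -/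
lemma lamSet_open_subset {a b c : ℝ} (ha : 0 ≤ a) (hab : a < b) (hc : 0 ≤ c) :
    ∃ S : Set (ℝ × ℝ), IsOpen S ∧ S ⊆ LamSet a b c ∧ ∃ z, z ∈ S := by
  refine ⟨{p | a + (c - a) * p.1 ^ 2 < p.2 ^ 2 ∧ p.2 ^ 2 < b + (c - b) * p.1 ^ 2 ∧
      |p.1| < 1 ∧ 0 < p.2}, ?_, ?_, ?_⟩
  · have h1 : IsOpen {p : ℝ × ℝ | a + (c - a) * p.1 ^ 2 < p.2 ^ 2} := by
      apply isOpen_lt <;> fun_prop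
    have h2 : IsOpen {p : ℝ × ℝ | p.2 ^ 2 < b + (c - b) * p.1 ^ 2} := by
      apply isOpen_lt <;> fun_prop
    have h3 : IsOpen {p : ℝ × ℝ | |p.1| < 1} := by
      apply isOpen_lt <;> fun_prop
    have h4 : IsOpen {p : ℝ × ℝ | (0:ℝ) < p.2} := by
      apply isOpen_lt <;> fun_prop
    simp only [Set.setOf_and]
    exact h1.inter (h2.inter (h3.inter h4))
  · intro p hp
    exact ⟨le_of_lt hp.1, le_of_lt hp.2.1, le_of_lt hp.2.2.1, le_of_lt hp.2.2.2⟩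
  · have hb : 0 < b := lt_of_le_of_lt ha hab
    have hs : Real.sqrt ((a + b) / 2) ^ 2 = (a + b) / 2 := Real.sq_sqrt (by linarith)
    refine ⟨(0, Real.sqrt ((a + b) / 2)), ?_, ?_, ?_, ?_⟩
    · show a + (c - a) * (0:ℝ) ^ 2 < _ ^ 2
      rw [hs]; norm_num; linarith
    · show (_ : ℝ) ^ 2 < b + (c - b) * (0:ℝ) ^ 2
      rw [hs]; norm_num; linarith
    · show |(0:ℝ)| < 1
      norm_num
    · show (0:ℝ) < Real.sqrt ((a + b) / 2)
      exact Real.sqrt_pos.mpr (by linarith)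

/-- An open subset of `Bplus`. -/
lemma bplus_open_subset :
    ∃ S : Set (ℝ × ℝ), IsOpen S ∧ S ⊆ Bplus ∧ ∃ z, z ∈ S := by
  refine ⟨{p | p.1 ^ 2 + p.2 ^ 2 < 1 ∧ 0 < p.2}, ?_, ?_, ⟨(0, 1/2), ?_⟩⟩
  · simp only [Set.setOf_and]
    refine IsOpen.inter ?_ ?_ <;> (apply isOpen_lt <;> fun_prop)
  · intro p hp
    exact ⟨le_of_lt hp.1, le_of_lt hp.2⟩
  · constructor <;> norm_num

/-- The substitution polynomial for `ψ`. -/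
def Qpoly (a b c : ℝ) : MvPolynomial (Fin 2) ℝ :=
  C ((b - a)⁻¹) * (C (-a) + C (a - c) * X 0 ^ 2 + X 1 ^ 2)

lemma Qpoly_eval (a b c u v : ℝ) :
    ev2 (Qpoly a b c) (u, v) = (-a + (a - c) * u ^ 2 + v ^ 2) / (b - a) := by
  rw [ev2_eval, div_eq_inv_mul, Qpoly]
  simp

lemma Qpoly_even (a b c : ℝ) : ∀ u v : ℝ, ev2 (Qpoly a b c) (u, -v) = ev2 (Qpoly a b c) (u, v) := by
  intro u v
  rw [Qpoly_eval, Qpoly_eval]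
  ring_nf

lemma Qpoly_deg (a b c : ℝ) : (Qpoly a b c).totalDegree ≤ 2 := by
  refine (totalDegree_mul _ _).trans ?_
  rw [totalDegree_C, zero_add]
  refine (totalDegree_add _ _).trans (max_le ?_ ?_)
  · refine (totalDegree_add _ _).trans (max_le ?_ ?_)
    · rw [totalDegree_C]; omega
    · refine (totalDegree_mul _ _).trans ?_
      rw [totalDegree_C, totalDegree_X_pow]
  · rw [totalDegree_X_pow]

/-- The substitution polynomial for `ψ⁻¹`. -/
def Rpoly (a b c : ℝ) : MvPolynomial (Fin 2) ℝ :=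
  C (b - a) * X 1 ^ 2 + C a + C (c - a) * X 0 ^ 2

lemma Rpoly_eval (a b c u v : ℝ) :
    ev2 (Rpoly a b c) (u, v) = (b - a) * v ^ 2 + a * (1 - u ^ 2) + c * u ^ 2 := by
  simp [Rpoly, ev2]
  ring

lemma Rpoly_even (a b c : ℝ) : ∀ u v : ℝ, ev2 (Rpoly a b c) (u, -v) = ev2 (Rpoly a b c) (u, v) := by
  intro u v
  rw [Rpoly_eval, Rpoly_eval]
  ring_nf

lemma Rpoly_deg (a b c : ℝ) : (Rpoly a b c).totalDegree ≤ 2 := by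
  refine (totalDegree_add _ _).trans (max_le ?_ ?_)
  · refine (totalDegree_add _ _).trans (max_le ?_ ?_)
    · refine (totalDegree_mul _ _).trans ?_
      rw [totalDegree_C, totalDegree_X_pow]
    · rw [totalDegree_C]; omega
  · refine (totalDegree_mul _ _).trans ?_
    rw [totalDegree_C, totalDegree_X_pow]

/-- composition with `ψ` resp. `ψ⁻¹` gives mutually inverse bijections
between polynomials of degree at most `n` even in the second variable, viewed as
functions on `B²₊` resp. on `Λ_{a,b,c}`, with the stated explicit formulas. -/
theorem even_polynomials_correspondence
    (a b c : ℝ) (ha : 0 ≤ a) (hab : a < b) (hc : 0 ≤ c) (n : ℕ) :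
    -- explicit formula for `G∘ψ`
    (∀ G H : MvPolynomial (Fin 2) ℝ, G.totalDegree ≤ n →
      (∀ s t : ℝ, ev2 G (s, t) = ev2 H (s, t ^ 2)) →
      (∀ p ∈ LamSet a b c,
        ev2 G (psiMap a b c p)
          = ev2 H (p.1, (-a + (a - c) * p.1 ^ 2 + p.2 ^ 2) / (b - a))) ∧
      ∃ Gt : MvPolynomial (Fin 2) ℝ, Gt.totalDegree ≤ n ∧ EvenSnd Gt ∧
        ∀ p : ℝ × ℝ,
          ev2 Gt p = ev2 H (p.1, (-a + (a - c) * p.1 ^ 2 + p.2 ^ 2) / (b - a))) ∧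
    -- explicit formula for `g∘ψ⁻¹`
    (∀ g h : MvPolynomial (Fin 2) ℝ, g.totalDegree ≤ n →
      (∀ u v : ℝ, ev2 g (u, v) = ev2 h (u, v ^ 2)) →
      (∀ p ∈ Bplus,
        ev2 g (psiInvMap a b c p)
          = ev2 h (p.1, (b - a) * p.2 ^ 2 + a * (1 - p.1 ^ 2) + c * p.1 ^ 2)) ∧
      ∃ gt : MvPolynomial (Fin 2) ℝ, gt.totalDegree ≤ n ∧ EvenSnd gt ∧
        ∀ p : ℝ × ℝ,
          ev2 gt p = ev2 h (p.1, (b - a) * p.2 ^ 2 + a * (1 - p.1 ^ 2) + c * p.1 ^ 2)) ∧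
    -- `G ↦ G∘ψ` is a bijection onto the even polynomial functions on `Λ_{a,b,c}`
    (∀ G ∈ EvenPolyFun n, ∃! F, F ∈ EvenPolyFun n ∧
      ∀ p ∈ LamSet a b c, F p = G (psiMap a b c p)) ∧
    -- `g ↦ g∘ψ⁻¹` is a bijection onto the even polynomial functions on `B²₊`
    (∀ F ∈ EvenPolyFun n, ∃! G, G ∈ EvenPolyFun n ∧
      ∀ p ∈ Bplus, G p = F (psiInvMap a b c p)) ∧
    -- the two assignments are mutually inverse
    (∀ G ∈ EvenPolyFun n, ∀ F ∈ EvenPolyFun n,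
      (∀ p ∈ LamSet a b c, F p = G (psiMap a b c p)) →
      ∀ p ∈ Bplus, G p = F (psiInvMap a b c p)) := by
  have hba : (0:ℝ) < b - a := by linarith
  -- nonnegativity of the `ψ` radicand on `LamSet`
  have hqLam : ∀ p ∈ LamSet a b c, 0 ≤ (-a + (a - c) * p.1 ^ 2 + p.2 ^ 2) / (b - a) := by
    intro p hp
    obtain ⟨h1, h2, h3, h4⟩ := hp
    exact div_nonneg (by nlinarith) (le_of_lt hba)
  -- nonnegativity of the `ψ⁻¹` radicand on `Bplus`
  have hrB : ∀ p ∈ Bplus, 0 ≤ (b - a) * p.2 ^ 2 + a * (1 - p.1 ^ 2) + c * p.1 ^ 2 := by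
    intro p hp
    obtain ⟨h1, h2⟩ := hp
    nlinarith [sq_nonneg p.1, sq_nonneg p.2]
  -- part 1 : formula for G ∘ ψ and the polynomial Gt
  have part1 : ∀ G H : MvPolynomial (Fin 2) ℝ, G.totalDegree ≤ n →
      (∀ s t : ℝ, ev2 G (s, t) = ev2 H (s, t ^ 2)) →
      (∀ p ∈ LamSet a b c,
        ev2 G (psiMap a b c p)
          = ev2 H (p.1, (-a + (a - c) * p.1 ^ 2 + p.2 ^ 2) / (b - a))) ∧
      ∃ Gt : MvPolynomial (Fin 2) ℝ, Gt.totalDegree ≤ n ∧ EvenSnd Gt ∧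
        ∀ p : ℝ × ℝ,
          ev2 Gt p = ev2 H (p.1, (-a + (a - c) * p.1 ^ 2 + p.2 ^ 2) / (b - a)) := by
    intro G H hGdeg hGH
    constructor
    · intro p hp
      show ev2 G (p.1, frakt a b c p) = _
      rw [hGH, frakt, Real.sq_sqrt (hqLam p hp)]
    · refine ⟨aeval ![X 0, Qpoly a b c] H,
        subst_deg (Qpoly a b c) H G (Qpoly_deg a b c) hGdeg hGH,
        subst_even (Qpoly a b c) H (Qpoly_even a b c), fun p => ?_⟩
      have := subst_eval (Qpoly a b c) H p.1 p.2
      rw [Qpoly_eval] at this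
      exact this
  -- part 2 : formula for g ∘ ψ⁻¹ and the polynomial gt
  have part2 : ∀ g h : MvPolynomial (Fin 2) ℝ, g.totalDegree ≤ n →
      (∀ u v : ℝ, ev2 g (u, v) = ev2 h (u, v ^ 2)) →
      (∀ p ∈ Bplus,
        ev2 g (psiInvMap a b c p)
          = ev2 h (p.1, (b - a) * p.2 ^ 2 + a * (1 - p.1 ^ 2) + c * p.1 ^ 2)) ∧
      ∃ gt : MvPolynomial (Fin 2) ℝ, gt.totalDegree ≤ n ∧ EvenSnd gt ∧
        ∀ p : ℝ × ℝ,
          ev2 gt p = ev2 h (p.1, (b - a) * p.2 ^ 2 + a * (1 - p.1 ^ 2) + c * p.1 ^ 2) := by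
    intro g h hgdeg hgh
    constructor
    · intro p hp
      show ev2 g (p.1, Real.sqrt _) = _
      rw [hgh, Real.sq_sqrt (hrB p hp)]
    · refine ⟨aeval ![X 0, Rpoly a b c] h,
        subst_deg (Rpoly a b c) h g (Rpoly_deg a b c) hgdeg hgh,
        subst_even (Rpoly a b c) h (Rpoly_even a b c), fun p => ?_⟩
      have := subst_eval (Rpoly a b c) h p.1 p.2
      rw [Rpoly_eval] at this
      exact this
  refine ⟨part1, part2, ?_, ?_, ?_⟩
  -- part 3 : G ↦ G ∘ ψ bijection
  · intro G hG
    obtain ⟨P, hPdeg, hPev, hPF⟩ := hG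
    obtain ⟨H, hH⟩ := even_halving hPev
    obtain ⟨hform, Gt, hGtdeg, hGtev, hGteval⟩ := part1 P H hPdeg hH
    have hFmem : (fun p => ev2 Gt p) ∈ EvenPolyFun n := ⟨Gt, hGtdeg, hGtev, fun _ => rfl⟩
    have hFeq : ∀ p ∈ LamSet a b c, ev2 Gt p = G (psiMap a b c p) := by
      intro p hp
      rw [hPF, hform p hp, hGteval]
    refine ⟨fun p => ev2 Gt p, ⟨hFmem, hFeq⟩, ?_⟩
    rintro F' ⟨hF'mem, hF'eq⟩
    obtain ⟨S, hSo, hSsub, z, hz⟩ := lamSet_open_subset ha hab hc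
    exact evenPolyFun_ext hF'mem hFmem hSo hz
      (fun p hp => (hF'eq p (hSsub hp)).trans (hFeq p (hSsub hp)).symm)
  -- part 4 : g ↦ g ∘ ψ⁻¹ bijection
  · intro F hF
    obtain ⟨P, hPdeg, hPev, hPF⟩ := hF
    obtain ⟨h, hh⟩ := even_halving hPev
    obtain ⟨hform, gt, hgtdeg, hgtev, hgteval⟩ := part2 P h hPdeg hh
    have hGmem : (fun p => ev2 gt p) ∈ EvenPolyFun n := ⟨gt, hgtdeg, hgtev, fun _ => rfl⟩
    have hGeq : ∀ p ∈ Bplus, ev2 gt p = F (psiInvMap a b c p) := by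
      intro p hp
      rw [hPF, hform p hp, hgteval]
    refine ⟨fun p => ev2 gt p, ⟨hGmem, hGeq⟩, ?_⟩
    rintro G' ⟨hG'mem, hG'eq⟩
    obtain ⟨S, hSo, hSsub, z, hz⟩ := bplus_open_subset
    exact evenPolyFun_ext hG'mem hGmem hSo hz
      (fun p hp => (hG'eq p (hSsub hp)).trans (hGeq p (hSsub hp)).symm)
  -- part 5 : mutual inverse
  · intro G _ F _ hFG p hp
    have hr : 0 ≤ (b - a) * p.2 ^ 2 + a * (1 - p.1 ^ 2) + c * p.1 ^ 2 := hrB p hp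
    obtain ⟨hp1, hp2⟩ := hp
    have hmem : psiInvMap a b c p ∈ LamSet a b c := by
      refine ⟨?_, ?_, ?_, ?_⟩
      · show a + (c - a) * p.1 ^ 2 ≤ Real.sqrt _ ^ 2
        rw [Real.sq_sqrt hr]
        nlinarith [sq_nonneg p.2]
      · show Real.sqrt _ ^ 2 ≤ b + (c - b) * p.1 ^ 2
        rw [Real.sq_sqrt hr]
        nlinarith
      · show |p.1| ≤ 1
        rw [abs_le]
        constructor <;> nlinarith [sq_nonneg p.2]
      · exact Real.sqrt_nonneg _
    have hcomp : psiMap a b c (psiInvMap a b c p) = p := by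
      unfold psiMap psiInvMap frakt
      ext
      · rfl
      · show Real.sqrt ((-a + (a - c) * p.1 ^ 2 + Real.sqrt _ ^ 2) / (b - a)) = p.2
        rw [Real.sq_sqrt hr]
        have : (-a + (a - c) * p.1 ^ 2 +
            ((b - a) * p.2 ^ 2 + a * (1 - p.1 ^ 2) + c * p.1 ^ 2)) / (b - a) = p.2 ^ 2 := by
          field_simp
          ring
        rw [this, Real.sqrt_sq hp2]
    calc G p = G (psiMap a b c (psiInvMap a b c p)) := by rw [hcomp]
      _ = F (psiInvMap a b c p) := (hFG _ hmem).symm
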